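/- Let (V, e) be an absolute order unit space and let p, q be order projections in V such that p ∧̇ q is an order projection. Then p ∧̇ q is the infimum of p and q in the set OP(V) of order projections: p ∧̇ q ≤ p, p ∧̇ q ≤ q, and every order projection r with r ≤ p and r ≤ q satisfies r ≤ p ∧̇ q. -/

import Mathlib

/-- The data of an *absolutely ordered space* on a real ordered vector space `V`:
a positive cone (given by the order, compatible with scalars and generating)
together with an absolute value map `|·| : V → V⁺` satisfying conditions (a)–(e). -/
structure AbsOrderedData (V : Type*) [AddCommGroup V] [PartialOrder V] [IsOrderedAddMonoid V] [Module ℝ V] : Type _ where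
  /-- the absolute value map -/
  vabs : V → V
  /-- the cone is closed under multiplication by nonnegative scalars -/
  smul_nonneg : ∀ (k : ℝ) (v : V), 0 ≤ k → 0 ≤ v → 0 ≤ k • v
  /-- the cone is generating -/
  generating : ∀ v : V, ∃ a b : V, 0 ≤ a ∧ 0 ≤ b ∧ v = a - b
  /-- `|·|` takes values in the cone -/
  abs_mem : ∀ v : V, 0 ≤ vabs v
  /-- (a) `|v| = v` for `v ∈ V⁺` -/
  abs_of_nonneg : ∀ v : V, 0 ≤ v → vabs v = v
  /-- (b) `|v| + v ∈ V⁺` -/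
  abs_add_nonneg : ∀ v : V, 0 ≤ vabs v + v
  /-- (b) `|v| − v ∈ V⁺` -/
  abs_sub_nonneg : ∀ v : V, 0 ≤ vabs v - v
  /-- (c) `|k • v| = |k| • |v|` -/
  abs_smul : ∀ (k : ℝ) (v : V), vabs (k • v) = |k| • vabs v
  /-- (d) if `|u − v| = u + v` and `0 ≤ w ≤ v` then `|u − w| = u + w` -/
  orth_of_le : ∀ u v w : V, vabs (u - v) = u + v → 0 ≤ w → w ≤ v → vabs (u - w) = u + w
  /-- (e), `+` case -/
  orth_add : ∀ u v w : V, vabs (u - v) = u + v → vabs (u - w) = u + w →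
    vabs (u - (v + w)) = u + vabs (v + w)
  /-- (e), `−` case -/
  orth_sub : ∀ u v w : V, vabs (u - v) = u + v → vabs (u - w) = u + w →
    vabs (u - (v - w)) = u + vabs (v - w)

namespace AbsOrderedData

variable {V : Type*} [AddCommGroup V] [PartialOrder V] [IsOrderedAddMonoid V] [Module ℝ V]

/-- `e` is an order unit for `V`. -/
def IsOrderUnit (e : V) : Prop :=
  ∀ v : V, ∃ k : ℝ, 0 < k ∧ -(k • e) ≤ v ∧ v ≤ k • e

/-- The order unit (semi)norm `‖v‖ = inf {k > 0 : −k•e ≤ v ≤ k•e}` determined by `e`. -/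
noncomputable def ounorm (e : V) (v : V) : ℝ :=
  sInf {k : ℝ | 0 < k ∧ -(k • e) ≤ v ∧ v ≤ k • e}

/-- `u ⊥ v` : `|u − v| = u + v`. -/
def orth (D : AbsOrderedData V) (u v : V) : Prop :=
  D.vabs (u - v) = u + v

/-- `u ⊥∞ v` : `‖α•u + β•v‖ = max ‖α•u‖ ‖β•v‖` for all real `α, β`. -/
def orthInfty (e u v : V) : Prop :=
  ∀ α β : ℝ, ounorm e (α • u + β • v) = max (ounorm e (α • u)) (ounorm e (β • v))

/-- `u ⊥∞ᵃ v` : `u₁ ⊥∞ v₁` whenever `0 ≤ u₁ ≤ u` and `0 ≤ v₁ ≤ v`. -/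
def orthInftyAbs (e u v : V) : Prop :=
  ∀ u₁ v₁ : V, 0 ≤ u₁ → u₁ ≤ u → 0 ≤ v₁ → v₁ ≤ v → orthInfty e u₁ v₁

/-- The cone `V⁺` is closed with respect to the order unit norm determined by `e`. -/
def PosConeClosed (e : V) : Prop :=
  ∀ v : V, (∀ ε : ℝ, 0 < ε → ∃ w : V, 0 ≤ w ∧ ounorm e (v - w) < ε) → 0 ≤ v

/-- `(V, e)` is an *absolute order unit space*: an absolutely ordered space with an order
unit `e`, a norm-closed cone, and `⊥ = ⊥∞ᵃ` on the cone. -/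
structure IsAbsOrderUnitSpace (D : AbsOrderedData V) (e : V) : Prop where
  isOrderUnit : IsOrderUnit e
  posConeClosed : PosConeClosed e
  orth_iff_orthInftyAbs : ∀ u v : V, 0 ≤ u → 0 ≤ v → (D.orth u v ↔ orthInftyAbs e u v)

/-- `u ∧̇ v = (1/2)(u + v − |u − v|)`. -/
noncomputable def wedge (D : AbsOrderedData V) (u v : V) : V :=
  (2⁻¹ : ℝ) • (u + v - D.vabs (u - v))

/-- `u ∨̇ v = (1/2)(u + v + |u − v|)`. -/
noncomputable def vee (D : AbsOrderedData V) (u v : V) : V :=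
  (2⁻¹ : ℝ) • (u + v + D.vabs (u - v))

/-- `p` is an *order projection*: `0 ≤ p ≤ e` and `p ⊥ (e − p)`. -/
def IsOP (D : AbsOrderedData V) (e p : V) : Prop :=
  0 ≤ p ∧ p ≤ e ∧ D.orth p (e - p)

/-- `u` and `v` are *absolutely compatible*: `|u − v| + |u + v − e| = e`. -/
def AbsCompat (D : AbsOrderedData V) (e u v : V) : Prop :=
  D.vabs (u - v) + D.vabs (u + v - e) = e

end AbsOrderedData

section Aux
open AbsOrderedData

variable {V : Type*} [AddCommGroup V] [PartialOrder V] [IsOrderedAddMonoid V] [Module ℝ V]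

private lemma ounorm_le_one' (e v : V) (h1 : -e ≤ v) (h2 : v ≤ e) :
    ounorm e v ≤ 1 := by
  apply csInf_le ⟨0, fun k hk => hk.1.le⟩
  exact ⟨one_pos, by simpa using h1, by simpa using h2⟩

private lemma ounorm_neg (e v : V) : ounorm e (-v) = ounorm e v := by
  unfold ounorm
  congr 1
  ext k
  constructor <;> rintro ⟨h1, h2, h3⟩
  · exact ⟨h1, neg_le.mp h3, by simpa using neg_le_neg h2⟩
  · exact ⟨h1, by simpa using neg_le_neg h3, neg_le.mpr h2⟩

private lemma ounorm_smul_e_lt (e : V) (he : 0 ≤ e)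
    (hsn : ∀ (k : ℝ) (x : V), 0 ≤ k → 0 ≤ x → 0 ≤ k • x)
    (t ε : ℝ) (hε : |t| < ε) : ounorm e (t • e) < ε := by
  set k₀ : ℝ := (|t| + ε) / 2 with hk₀
  have habs : (0:ℝ) ≤ |t| := abs_nonneg t
  have hk₀pos : 0 < k₀ := by simp only [hk₀]; linarith
  have htk : t ≤ k₀ := le_trans (le_abs_self t) (by simp [hk₀]; linarith)
  have htk' : -k₀ ≤ t := by
    have := neg_abs_le t
    simp only [hk₀] at *
    linarith
  have hmem : k₀ ∈ {k : ℝ | 0 < k ∧ -(k • e) ≤ t • e ∧ t • e ≤ k • e} := by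
    refine ⟨hk₀pos, ?_, ?_⟩
    · rw [← sub_nonneg, sub_neg_eq_add, ← add_smul]
      exact hsn _ _ (by linarith) he
    · rw [← sub_nonneg, ← sub_smul]
      exact hsn _ _ (by linarith) he
  have := csInf_le ⟨0, fun k hk => hk.1.le⟩ hmem
  calc ounorm e (t • e) ≤ k₀ := this
    _ < ε := by simp [hk₀]; linarith

private lemma le_of_pos_ounorm_le_one (e v : V)
    (hsn : ∀ (k : ℝ) (x : V), 0 ≤ k → 0 ≤ x → 0 ≤ k • x)
    (he : 0 ≤ e) (hou : IsOrderUnit e) (hcl : PosConeClosed e)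
    (hn : ounorm e v ≤ 1) : v ≤ e := by
  rw [← sub_nonneg]
  apply hcl
  intro ε hε
  obtain ⟨k₀, hk₀⟩ := hou v
  have hne : {k : ℝ | 0 < k ∧ -(k • e) ≤ v ∧ v ≤ k • e}.Nonempty := ⟨k₀, hk₀⟩
  have hlt : sInf {k : ℝ | 0 < k ∧ -(k • e) ≤ v ∧ v ≤ k • e} < 1 + ε / 2 :=
    lt_of_le_of_lt hn (by linarith)
  obtain ⟨k, hkS, hk⟩ := exists_lt_of_csInf_lt hne hlt
  by_cases hk1 : k ≤ 1
  · refine ⟨e - v, ?_, ?_⟩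
    · have h1 : 0 ≤ e - k • e := by
        have : (0:V) ≤ (1 - k) • e := hsn _ _ (by linarith) he
        rwa [sub_smul, one_smul] at this
      have h2 : 0 ≤ k • e - v := sub_nonneg.mpr hkS.2.2
      have := add_nonneg h1 h2
      rwa [sub_add_sub_cancel] at this
    · have h0 : e - v - (e - v) = (0:ℝ) • e := by module
      rw [h0]
      exact ounorm_smul_e_lt e he hsn 0 ε (by simpa using hε)
  · refine ⟨k • e - v, sub_nonneg.mpr hkS.2.2, ?_⟩
    have h0 : e - v - (k • e - v) = (1 - k) • e := by module
    rw [h0]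
    apply ounorm_smul_e_lt e he hsn
    rw [abs_of_nonpos (by linarith)]
    linarith

end Aux

open AbsOrderedData in
/-- In an absolute order unit space `(V, e)`, if `p, q` are order
projections and `p ∧̇ q` is an order projection, then `p ∧̇ q` is the infimum of `p`
and `q` in the set of order projections. -/
theorem orderProjection_wedge_is_inf {V : Type*} [AddCommGroup V] [PartialOrder V] [IsOrderedAddMonoid V] [Module ℝ V]
    (D : AbsOrderedData V) (e : V) (hV : D.IsAbsOrderUnitSpace e)
    (p q : V) (hp : D.IsOP e p) (hq : D.IsOP e q) (hw : D.IsOP e (D.wedge p q)) :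
    D.wedge p q ≤ p ∧ D.wedge p q ≤ q ∧
      ∀ r : V, D.IsOP e r → r ≤ p → r ≤ q → r ≤ D.wedge p q := by
  obtain ⟨hp0, hpe, hpo⟩ := hp
  obtain ⟨hq0, hqe, hqo⟩ := hq
  obtain ⟨hw0, hwe, hwo⟩ := hw
  have he : (0:V) ≤ e := le_trans hp0 hpe
  set c : V := D.vabs (p - q) with hc_def
  have hc0 : 0 ≤ c := D.abs_mem _
  -- Part 1 : wedge ≤ p
  have hpw : p - D.wedge p q = (2⁻¹:ℝ) • (c + (p - q)) := by
    rw [wedge, hc_def]; module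
  have hpw0 : 0 ≤ p - D.wedge p q := by
    rw [hpw]
    exact D.smul_nonneg _ _ (by norm_num) (D.abs_add_nonneg (p - q))
  have hqw : q - D.wedge p q = (2⁻¹:ℝ) • (c - (p - q)) := by
    rw [wedge, hc_def]; module
  have hqw0 : 0 ≤ q - D.wedge p q := by
    rw [hqw]
    exact D.smul_nonneg _ _ (by norm_num) (D.abs_sub_nonneg (p - q))
  refine ⟨sub_nonneg.mp hpw0, sub_nonneg.mp hqw0, ?_⟩
  -- key identity : (p - w) + (q - w) = c
  have hsum : (p - D.wedge p q) + (q - D.wedge p q) = c := by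
    rw [wedge, hc_def]; module
  -- w ⊥ (p - w) and w ⊥ (q - w)
  have hwp : D.vabs (D.wedge p q - (p - D.wedge p q))
      = D.wedge p q + (p - D.wedge p q) :=
    D.orth_of_le _ _ _ hwo hpw0 (sub_le_sub_right hpe _)
  have hwq : D.vabs (D.wedge p q - (q - D.wedge p q))
      = D.wedge p q + (q - D.wedge p q) :=
    D.orth_of_le _ _ _ hwo hqw0 (sub_le_sub_right hqe _)
  -- hence w ⊥ c
  have hwc : D.vabs (D.wedge p q - c) = D.wedge p q + c := by
    have h := D.orth_add _ _ _ hwp hwq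
    rw [hsum, D.abs_of_nonneg c hc0] at h
    exact h
  -- norm facts
  have hnormw : ounorm e (D.wedge p q) ≤ 1 :=
    ounorm_le_one' e _ (le_trans (neg_nonpos_of_nonneg he) hw0) hwe
  -- ‖c‖ ≤ 1 via the decomposition c = (p-w) + (q-w) with (p-w) ⊥ (q-w)
  have hnormc : ounorm e c ≤ 1 := by
    have hdiff : (p - D.wedge p q) - (q - D.wedge p q) = p - q := by module
    have hxo : D.orth (p - D.wedge p q) (q - D.wedge p q) := by
      show D.vabs _ = _
      rw [hdiff, hsum, ← hc_def]
    have hinf := ((hV.orth_iff_orthInftyAbs _ _ hpw0 hqw0).1 hxo)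
      _ _ hpw0 le_rfl hqw0 le_rfl
    have h11 := hinf 1 1
    have h1m := hinf 1 (-1)
    simp only [one_smul, neg_one_smul] at h11 h1m
    rw [hsum] at h11
    rw [← sub_eq_add_neg, hdiff, ounorm_neg] at h1m
    rw [h11, ← h1m]
    apply ounorm_le_one' e _ _ _
    · calc -e ≤ 0 - q := by
            rw [zero_sub]
            exact neg_le_neg hqe
        _ ≤ p - q := sub_le_sub_right hp0 _
    · calc p - q ≤ e - q := sub_le_sub_right hpe _
        _ ≤ e - 0 := sub_le_sub_left hq0 _
        _ = e := sub_zero e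
  -- the crucial inequality : w + c ≤ e
  have hwcle : D.wedge p q + c ≤ e := by
    have hinf := ((hV.orth_iff_orthInftyAbs _ _ hw0 hc0).1 hwc)
      _ _ hw0 le_rfl hc0 le_rfl
    have h11 := hinf 1 1
    simp only [one_smul] at h11
    apply le_of_pos_ounorm_le_one e _ D.smul_nonneg he hV.isOrderUnit hV.posConeClosed
    rw [h11]
    exact max_le hnormw hnormc
  -- now the infimum property
  intro r hr hrp hrq
  obtain ⟨hr0, hre, hro⟩ := hr
  have hra : D.vabs (r - (e - p)) = r + (e - p) :=
    D.orth_of_le _ _ _ hro (sub_nonneg.mpr hpe) (sub_le_sub_left hrp e)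
  have hrb : D.vabs (r - (e - q)) = r + (e - q) :=
    D.orth_of_le _ _ _ hro (sub_nonneg.mpr hqe) (sub_le_sub_left hrq e)
  have hab0 : 0 ≤ (e - p) + (e - q) :=
    add_nonneg (sub_nonneg.mpr hpe) (sub_nonneg.mpr hqe)
  have hrab : D.vabs (r - ((e - p) + (e - q))) = r + ((e - p) + (e - q)) := by
    have h := D.orth_add _ _ _ hra hrb
    rwa [D.abs_of_nonneg _ hab0] at h
  -- c ≤ (e-p)+(e-q)
  have hcab : c ≤ (e - p) + (e - q) := by
    rw [← sub_nonneg]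
    have hid : (e - p) + (e - q) - c
        = (e - (D.wedge p q + c)) + (e - (D.wedge p q + c)) := by
      rw [wedge, hc_def]; module
    rw [hid]
    exact add_nonneg (sub_nonneg.mpr hwcle) (sub_nonneg.mpr hwcle)
  have hrc : D.vabs (r - c) = r + c :=
    D.orth_of_le _ _ _ hrab hc0 hcab
  have hs0 : 0 ≤ ((e - p) + (e - q)) + c := add_nonneg hab0 hc0
  have hrs : D.vabs (r - (((e - p) + (e - q)) + c))
      = r + (((e - p) + (e - q)) + c) := by
    have h := D.orth_add _ _ _ hrab hrc
    rwa [D.abs_of_nonneg _ hs0] at h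
  -- e - w ≤ s and 0 ≤ e - w
  have hew0 : 0 ≤ e - D.wedge p q := sub_nonneg.mpr hwe
  have hews : e - D.wedge p q ≤ ((e - p) + (e - q)) + c := by
    rw [← sub_nonneg]
    have hid : ((e - p) + (e - q)) + c - (e - D.wedge p q) = e - D.wedge p q := by
      rw [wedge, hc_def]; module
    rw [hid]
    exact hew0
  have hrew : D.vabs (r - (e - D.wedge p q)) = r + (e - D.wedge p q) :=
    D.orth_of_le _ _ _ hrs hew0 hews
  -- conclude via the norm
  have hinf := ((hV.orth_iff_orthInftyAbs _ _ hr0 hew0).1 hrew)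
    _ _ hr0 le_rfl hew0 le_rfl
  have h11 := hinf 1 1
  simp only [one_smul] at h11
  have hnr : ounorm e r ≤ 1 :=
    ounorm_le_one' e _ (le_trans (neg_nonpos_of_nonneg he) hr0) hre
  have hnew : ounorm e (e - D.wedge p q) ≤ 1 :=
    ounorm_le_one' e _ (le_trans (neg_nonpos_of_nonneg he) hew0)
      (by rw [sub_le_iff_le_add]; exact le_add_of_nonneg_right hw0)
  have hfin : r + (e - D.wedge p q) ≤ e := by
    apply le_of_pos_ounorm_le_one e _ D.smul_nonneg he hV.isOrderUnit hV.posConeClosed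
    rw [h11]
    exact max_le hnr hnew
  rw [← sub_nonneg]
  have hid : D.wedge p q - r = e - (r + (e - D.wedge p q)) := by module
  rw [hid]
  exact sub_nonneg.mpr hfin
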